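/- Let ρ = 10, x⊙y = xᵀJ_{10}y, P_1 = (1,1,1,1,0,0,−1,−1,1,1) and E = e_9 + e_10 = (0,0,0,0,0,0,0,0,1,1). Then P_1⊙P_1 = 0, E⊙E = 0, P_1⊙E = −4 ≠ 0, and the map φ_{P_1,E}(x) = 2((P_1⊙x)·E + (E⊙x)·P_1)/(P_1⊙E) − x belongs to O^+_{Λ_{10}}: it maps ℤ^{10} onto ℤ^{10}, preserves the Lorentz product, and satisfies (φ_{P_1,E}(D))⊙D < 0 where D = (1,…,1). -/
import Mathlib

set_option maxHeartbeats 1000000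

/-- The Lorentz product over `ℝ`, given by the matrix `J_ρ` with diagonal
entries `1` and off-diagonal entries `-1`. -/
noncomputable def lor {ρ : ℕ} (x y : Fin ρ → ℝ) : ℝ :=
  ∑ i, ∑ j, x i * (if i = j then (1 : ℝ) else -1) * y j

/-- The map `φ_{P,Q}(x) = 2((P⊙x)Q + (Q⊙x)P)/(P⊙Q) - x`. -/
noncomputable def phiV {ρ : ℕ} (P Q : Fin ρ → ℝ) (x : Fin ρ → ℝ) : Fin ρ → ℝ :=
  (2 / lor P Q) • ((lor P x) • Q + (lor Q x) • P) - x

section Aux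

variable {α : Type*}

lemma v0 (a b c d e f g h i j : α) : ![a,b,c,d,e,f,g,h,i,j] (0 : Fin 10) = a := rfl
lemma v1 (a b c d e f g h i j : α) : ![a,b,c,d,e,f,g,h,i,j] (1 : Fin 10) = b := rfl
lemma v2 (a b c d e f g h i j : α) : ![a,b,c,d,e,f,g,h,i,j] (2 : Fin 10) = c := rfl
lemma v3 (a b c d e f g h i j : α) : ![a,b,c,d,e,f,g,h,i,j] (3 : Fin 10) = d := rfl
lemma v4 (a b c d e f g h i j : α) : ![a,b,c,d,e,f,g,h,i,j] (4 : Fin 10) = e := rfl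
lemma v5 (a b c d e f g h i j : α) : ![a,b,c,d,e,f,g,h,i,j] (5 : Fin 10) = f := rfl
lemma v6 (a b c d e f g h i j : α) : ![a,b,c,d,e,f,g,h,i,j] (6 : Fin 10) = g := rfl
lemma v7 (a b c d e f g h i j : α) : ![a,b,c,d,e,f,g,h,i,j] (7 : Fin 10) = h := rfl
lemma v8 (a b c d e f g h i j : α) : ![a,b,c,d,e,f,g,h,i,j] (8 : Fin 10) = i := rfl
lemma v9 (a b c d e f g h i j : α) : ![a,b,c,d,e,f,g,h,i,j] (9 : Fin 10) = j := rfl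

lemma funext10 {α : Type*} (f g : Fin 10 → α) (h0 : f 0 = g 0) (h1 : f 1 = g 1)
    (h2 : f 2 = g 2) (h3 : f 3 = g 3) (h4 : f 4 = g 4) (h5 : f 5 = g 5) (h6 : f 6 = g 6)
    (h7 : f 7 = g 7) (h8 : f 8 = g 8) (h9 : f 9 = g 9) : f = g := by
  funext t
  fin_cases t
  exacts [h0, h1, h2, h3, h4, h5, h6, h7, h8, h9]

lemma sum10 {M : Type*} [AddCommMonoid M] (f : Fin 10 → M) :
    ∑ i, f i = f 0 + f 1 + f 2 + f 3 + f 4 + f 5 + f 6 + f 7 + f 8 + f 9 := by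
  rw [Fin.sum_univ_castSucc, Fin.sum_univ_castSucc, Fin.sum_univ_eight]
  rfl

lemma lor_expand (x y : Fin 10 → ℝ) :
    lor x y = 2 * (x 0 * y 0 + x 1 * y 1 + x 2 * y 2 + x 3 * y 3 + x 4 * y 4
      + x 5 * y 5 + x 6 * y 6 + x 7 * y 7 + x 8 * y 8 + x 9 * y 9)
      - (x 0 + x 1 + x 2 + x 3 + x 4 + x 5 + x 6 + x 7 + x 8 + x 9)
      * (y 0 + y 1 + y 2 + y 3 + y 4 + y 5 + y 6 + y 7 + y 8 + y 9) := by
  simp only [lor, sum10, Fin.reduceEq, reduceIte]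
  ring

lemma lorP1 (x : Fin 10 → ℝ) :
    lor ![1, 1, 1, 1, 0, 0, -1, -1, 1, 1] x =
      -2*x 0 - 2*x 1 - 2*x 2 - 2*x 3 - 4*x 4 - 4*x 5 - 6*x 6 - 6*x 7 - 2*x 8 - 2*x 9 := by
  rw [lor_expand]
  simp only [v0, v1, v2, v3, v4, v5, v6, v7, v8, v9]
  ring

lemma lorE (x : Fin 10 → ℝ) :
    lor ![0, 0, 0, 0, 0, 0, 0, 0, 1, 1] x =
      -2 * (x 0 + x 1 + x 2 + x 3 + x 4 + x 5 + x 6 + x 7) := by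
  rw [lor_expand]
  simp only [v0, v1, v2, v3, v4, v5, v6, v7, v8, v9]
  ring

lemma lorPE : lor ![1, 1, 1, 1, 0, 0, -1, -1, 1, 1] ![0, 0, 0, 0, 0, 0, 0, 0, 1, 1] = -4 := by
  rw [lorP1]
  simp only [v0, v1, v2, v3, v4, v5, v6, v7, v8, v9]
  norm_num

lemma phi_apply (x : Fin 10 → ℝ) (t : Fin 10) :
    phiV ![1, 1, 1, 1, 0, 0, -1, -1, 1, 1] ![0, 0, 0, 0, 0, 0, 0, 0, 1, 1] x t =
      -(1/2) * ((lor ![1, 1, 1, 1, 0, 0, -1, -1, 1, 1] x) * (![0, 0, 0, 0, 0, 0, 0, 0, 1, 1] t)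
        + (lor ![0, 0, 0, 0, 0, 0, 0, 0, 1, 1] x) * (![1, 1, 1, 1, 0, 0, -1, -1, 1, 1] t))
      - x t := by
  simp only [phiV, lorPE, Pi.sub_apply, Pi.smul_apply, Pi.add_apply, smul_eq_mul]
  ring

lemma phi_eq (x : Fin 10 → ℝ) :
    phiV ![1, 1, 1, 1, 0, 0, -1, -1, 1, 1] ![0, 0, 0, 0, 0, 0, 0, 0, 1, 1] x =
    ![(x 1 + x 2 + x 3 + x 4 + x 5 + x 6 + x 7),
      (x 0 + x 2 + x 3 + x 4 + x 5 + x 6 + x 7),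
      (x 0 + x 1 + x 3 + x 4 + x 5 + x 6 + x 7),
      (x 0 + x 1 + x 2 + x 4 + x 5 + x 6 + x 7),
      -x 4, -x 5,
      -(x 0 + x 1 + x 2 + x 3 + x 4 + x 5 + x 6 + x 7) - x 6,
      -(x 0 + x 1 + x 2 + x 3 + x 4 + x 5 + x 6 + x 7) - x 7,
      2*(x 0 + x 1 + x 2 + x 3) + 3*(x 4 + x 5) + 4*(x 6 + x 7) + x 9,
      2*(x 0 + x 1 + x 2 + x 3) + 3*(x 4 + x 5) + 4*(x 6 + x 7) + x 8] := by
  refine funext10 _ _ ?_ ?_ ?_ ?_ ?_ ?_ ?_ ?_ ?_ ?_ <;>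
    · rw [phi_apply, lorP1, lorE]
      simp only [v0, v1, v2, v3, v4, v5, v6, v7, v8, v9]
      ring

lemma phi_invol (z : Fin 10 → ℝ) :
    phiV ![1, 1, 1, 1, 0, 0, -1, -1, 1, 1] ![0, 0, 0, 0, 0, 0, 0, 0, 1, 1]
      (phiV ![1, 1, 1, 1, 0, 0, -1, -1, 1, 1] ![0, 0, 0, 0, 0, 0, 0, 0, 1, 1] z) = z := by
  rw [phi_eq z, phi_eq]
  refine funext10 _ _ ?_ ?_ ?_ ?_ ?_ ?_ ?_ ?_ ?_ ?_ <;>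
    · simp only [v0, v1, v2, v3, v4, v5, v6, v7, v8, v9]
      ring

end Aux

/-- For `ρ = 10`, `P₁ = (1,1,1,1,0,0,-1,-1,1,1)` and `E = e₉ + e₁₀`:
`P₁⊙P₁ = 0`, `E⊙E = 0`, `P₁⊙E = -4 ≠ 0`, and `φ_{P₁,E}` lies in `O⁺_{Λ₁₀}`:
it maps `ℤ¹⁰` onto `ℤ¹⁰`, preserves the Lorentz product, and sends `D` to the
same sheet as `D` (`φ(D)⊙D < 0`). -/
theorem phi_P1_E_in_OPlus :
    let P₁ : Fin 10 → ℝ := ![1, 1, 1, 1, 0, 0, -1, -1, 1, 1]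
    let E : Fin 10 → ℝ := ![0, 0, 0, 0, 0, 0, 0, 0, 1, 1]
    let D : Fin 10 → ℝ := fun _ => 1
    lor P₁ P₁ = 0 ∧ lor E E = 0 ∧ lor P₁ E = -4 ∧ lor P₁ E ≠ 0 ∧
    (∀ x : Fin 10 → ℤ, ∃ y : Fin 10 → ℤ,
      phiV P₁ E (fun t => (x t : ℝ)) = fun t => (y t : ℝ)) ∧
    (∀ y : Fin 10 → ℤ, ∃ x : Fin 10 → ℤ,
      phiV P₁ E (fun t => (x t : ℝ)) = fun t => (y t : ℝ)) ∧
    (∀ x y : Fin 10 → ℝ, lor (phiV P₁ E x) (phiV P₁ E y) = lor x y) ∧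
    lor (phiV P₁ E D) D < 0 := by
  intro P₁ E D
  have hint : ∀ x : Fin 10 → ℤ, ∃ y : Fin 10 → ℤ,
      phiV P₁ E (fun t => (x t : ℝ)) = fun t => (y t : ℝ) := by
    intro x
    refine ⟨![(x 1 + x 2 + x 3 + x 4 + x 5 + x 6 + x 7),
      (x 0 + x 2 + x 3 + x 4 + x 5 + x 6 + x 7),
      (x 0 + x 1 + x 3 + x 4 + x 5 + x 6 + x 7),
      (x 0 + x 1 + x 2 + x 4 + x 5 + x 6 + x 7),
      -x 4, -x 5,
      -(x 0 + x 1 + x 2 + x 3 + x 4 + x 5 + x 6 + x 7) - x 6,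
      -(x 0 + x 1 + x 2 + x 3 + x 4 + x 5 + x 6 + x 7) - x 7,
      2*(x 0 + x 1 + x 2 + x 3) + 3*(x 4 + x 5) + 4*(x 6 + x 7) + x 9,
      2*(x 0 + x 1 + x 2 + x 3) + 3*(x 4 + x 5) + 4*(x 6 + x 7) + x 8], ?_⟩
    rw [show phiV P₁ E (fun t => ((x t : ℝ))) =
        phiV ![1, 1, 1, 1, 0, 0, -1, -1, 1, 1] ![0, 0, 0, 0, 0, 0, 0, 0, 1, 1]
          (fun t => ((x t : ℝ))) from rfl, phi_eq]
    refine funext10 _ _ ?_ ?_ ?_ ?_ ?_ ?_ ?_ ?_ ?_ ?_ <;>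
      · simp only [v0, v1, v2, v3, v4, v5, v6, v7, v8, v9]
        push_cast
        ring
  refine ⟨?_, ?_, ?_, ?_, hint, ?_, ?_, ?_⟩
  · rw [show lor P₁ P₁ = lor ![1, 1, 1, 1, 0, 0, -1, -1, 1, 1] ![1, 1, 1, 1, 0, 0, -1, -1, 1, 1]
      from rfl, lorP1]
    simp only [v0, v1, v2, v3, v4, v5, v6, v7, v8, v9]
    norm_num
  · rw [show lor E E = lor ![0, 0, 0, 0, 0, 0, 0, 0, 1, 1] ![0, 0, 0, 0, 0, 0, 0, 0, 1, 1]
      from rfl, lorE]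
    simp only [v0, v1, v2, v3, v4, v5, v6, v7, v8, v9]
    norm_num
  · exact lorPE
  · rw [show lor P₁ E = lor ![1, 1, 1, 1, 0, 0, -1, -1, 1, 1] ![0, 0, 0, 0, 0, 0, 0, 0, 1, 1]
      from rfl, lorPE]
    norm_num
  · -- surjectivity: use the involution
    intro y
    obtain ⟨x, hx⟩ := hint y
    refine ⟨x, ?_⟩
    have h2 := phi_invol (fun t => ((y t : ℝ)))
    calc phiV P₁ E (fun t => ((x t : ℝ)))
        = phiV ![1, 1, 1, 1, 0, 0, -1, -1, 1, 1] ![0, 0, 0, 0, 0, 0, 0, 0, 1, 1]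
            (phiV ![1, 1, 1, 1, 0, 0, -1, -1, 1, 1] ![0, 0, 0, 0, 0, 0, 0, 0, 1, 1]
              (fun t => ((y t : ℝ)))) := by
          rw [show phiV ![1, 1, 1, 1, 0, 0, -1, -1, 1, 1] ![0, 0, 0, 0, 0, 0, 0, 0, 1, 1]
              (fun t => ((y t : ℝ))) = fun t => ((x t : ℝ)) from hx]
      _ = fun t => ((y t : ℝ)) := h2
  · intro x y
    rw [show phiV P₁ E x = phiV ![1, 1, 1, 1, 0, 0, -1, -1, 1, 1]
        ![0, 0, 0, 0, 0, 0, 0, 0, 1, 1] x from rfl,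
      show phiV P₁ E y = phiV ![1, 1, 1, 1, 0, 0, -1, -1, 1, 1]
        ![0, 0, 0, 0, 0, 0, 0, 0, 1, 1] y from rfl,
      phi_eq x, phi_eq y, lor_expand, lor_expand]
    simp only [v0, v1, v2, v3, v4, v5, v6, v7, v8, v9]
    ring
  · rw [show phiV P₁ E D = phiV ![1, 1, 1, 1, 0, 0, -1, -1, 1, 1]
        ![0, 0, 0, 0, 0, 0, 0, 0, 1, 1] (fun _ => (1:ℝ)) from rfl,
      phi_eq, lor_expand]
    simp only [v0, v1, v2, v3, v4, v5, v6, v7, v8, v9]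
    norm_num
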